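/- arXiv:1801.08410 — 3 statements merged into one kernel-verified Lean document; each statement's English description precedes it below -/
import Mathlib

section
/- Let F be a well-formed valuation into a lattice L. Suppose S₁ and S₂ are sets of messages such that for every atom α occurring in S₁, F(α,S₁) ⊒ ⌜α⌝ or k ⊒ ⌜α⌝, and similarly for S₂. Then for every atom α occurring in S₁ ∪ S₂, F(α, S₁ ∪ S₂) ⊒ ⌜α⌝ or k ⊒ ⌜α⌝. (Inductive combination step of the main lemma, using F(α, S₁ ∪ S₂) = F(α,S₁) ⊓ F(α,S₂) and well-formedness on non-occurring atoms.) -/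
theorem le_inf_or_le {L : Type*} [SemilatticeInf L] {a b c k : L}
    (ha : c ≤ a ∨ c ≤ k) (hb : c ≤ b ∨ c ≤ k) : c ≤ a ⊓ b ∨ c ≤ k := by
  rcases ha with ha | hk
  · rcases hb with hb | hk
    · exact Or.inl (le_inf ha hb)
    · exact Or.inr hk
  · exact Or.inr hk

theorem le_or_le_of_imp_of_not_imp_eq_top {L : Type*} [LE L] [OrderTop L] {p : Prop}
    {a c k : L} (h : p → c ≤ a ∨ c ≤ k) (htop : ¬p → a = ⊤) : c ≤ a ∨ c ≤ k := by
  by_cases hp : p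
  · exact h hp
  · exact Or.inl ((htop hp).symm ▸ le_top)

theorem stmt6_general {A M L : Type*} [Lattice L] [OrderTop L]
    (occursIn : A → Set M → Prop)
    (F : A → Set M → L) (lvl : A → L) (k : L)
    (hwf2 : ∀ (α : A) (S : Set M), ¬ occursIn α S → F α S = ⊤)
    (hwf3 : ∀ (α : A) (S₁ S₂ : Set M), F α (S₁ ∪ S₂) = F α S₁ ⊓ F α S₂)
    (S₁ S₂ : Set M)
    (h1 : ∀ α : A, occursIn α S₁ → lvl α ≤ F α S₁ ∨ lvl α ≤ k)
    (h2 : ∀ α : A, occursIn α S₂ → lvl α ≤ F α S₂ ∨ lvl α ≤ k) :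
    ∀ α : A, occursIn α (S₁ ∪ S₂) → lvl α ≤ F α (S₁ ∪ S₂) ∨ lvl α ≤ k := by
  intro α _
  rw [hwf3]
  exact le_inf_or_le (le_or_le_of_imp_of_not_imp_eq_top (h1 α) (hwf2 α S₁))
    (le_or_le_of_imp_of_not_imp_eq_top (h2 α) (hwf2 α S₂))

/-- inductive combination step of the main lemma. -/
theorem stmt6 {A M L : Type*} [Lattice L] [OrderTop L]
    (occursIn : A → Set M → Prop)
    (F : A → Set M → L) (lvl : A → L) (k : L)
    (hoccUnion : ∀ (α : A) (S₁ S₂ : Set M),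
      occursIn α (S₁ ∪ S₂) ↔ occursIn α S₁ ∨ occursIn α S₂)
    (hwf2 : ∀ (α : A) (S : Set M), ¬ occursIn α S → F α S = ⊤)
    (hwf3 : ∀ (α : A) (S₁ S₂ : Set M), F α (S₁ ∪ S₂) = F α S₁ ⊓ F α S₂)
    (S₁ S₂ : Set M)
    (h1 : ∀ α : A, occursIn α S₁ → lvl α ≤ F α S₁ ∨ lvl α ≤ k)
    (h2 : ∀ α : A, occursIn α S₂ → lvl α ≤ F α S₂ ∨ lvl α ≤ k) :
    ∀ α : A, occursIn α (S₁ ∪ S₂) → lvl α ≤ F α (S₁ ∪ S₂) ∨ lvl α ≤ k :=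
  stmt6_general occursIn F lvl k hwf2 hwf3 S₁ S₂ h1 h2
end

section
/- Main theorem (security of increasing protocols, abstract form): Let L be a complete lattice, F a reliable valuation, and suppose the conclusion of the main lemma holds: for every valid trace ρ and message m with ρ ⊨ m and every atom α in m, F(α,{m}) ⊒ ⌜α⌝ or k ⊒ ⌜α⌝. Assume additionally that for every atom α, ⌜α⌝ = ⊥ implies k ⊒ ⌜α⌝. Then the protocol is correct with respect to secrecy: for every valid trace ρ and every atom α, if ρ ⊨ α (the atom itself is deducible) then k ⊒ ⌜α⌝. -/
/-- A protocol step, with the set of messages sent (`sp`) and received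
(`sm`) in that step. -/
structure ProtoStep (M : Type*) where
  sp : Set M
  sm : Set M

/-- Messages sent along a trace. -/
def tracePlus {M : Type*} (ρ : List (ProtoStep M)) : Set M :=
  ⋃ s ∈ ρ, s.sp

theorem stmt8_general {A M L : Type*} [CompleteLattice L]
    (atomsOf : M → Set A)
    (ded : Set M → M → Prop)
    (F : A → Set M → L) (lvl : A → L) (k : L)
    (emb : A → M)
    (valid : List (ProtoStep M) → Prop)
    -- an atom is among the atoms of its embedding as a message
    (hatom : ∀ α : A, α ∈ atomsOf (emb α))
    -- F is well-formed, in particular F(α,{α}) = ⊥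
    (hwf1 : ∀ α : A, F α {emb α} = ⊥)
    -- conclusion of the main lemma
    (hlem : ∀ ρ : List (ProtoStep M), valid ρ →
      ∀ m : M, ded (tracePlus ρ) m →
        ∀ α ∈ atomsOf m, lvl α ≤ F α {m} ∨ lvl α ≤ k) :
    ∀ ρ : List (ProtoStep M), valid ρ →
      ∀ α : A, ded (tracePlus ρ) (emb α) → lvl α ≤ k := by
  intro ρ hρ α hded
  rcases hlem ρ hρ (emb α) hded α (hatom α) with hF | hk
  · exact (hwf1 α ▸ hF).trans bot_le
  · exact hk

/-- security of increasing protocols, abstract form: assuming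
the conclusion of the main lemma, the protocol is correct with respect to
secrecy: any atom deducible from a valid trace is allowed to the intruder. -/
theorem stmt8 {A M L : Type*} [CompleteLattice L]
    (atomsOf : M → Set A)
    (ded : Set M → M → Prop)
    (F : A → Set M → L) (lvl : A → L) (k : L)
    (emb : A → M)
    (valid : List (ProtoStep M) → Prop)
    -- an atom is among the atoms of its embedding as a message
    (hatom : ∀ α : A, α ∈ atomsOf (emb α))
    -- F is well-formed, in particular F(α,{α}) = ⊥
    (hwf1 : ∀ α : A, F α {emb α} = ⊥)
    -- conclusion of the main lemma
    (hlem : ∀ ρ : List (ProtoStep M), valid ρ →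
      ∀ m : M, ded (tracePlus ρ) m →
        ∀ α ∈ atomsOf m, lvl α ≤ F α {m} ∨ lvl α ≤ k)
    -- additional assumption: atoms of bottom level are allowed
    (hbot : ∀ α : A, lvl α = ⊥ → lvl α ≤ k) :
    ∀ ρ : List (ProtoStep M), valid ρ →
      ∀ α : A, ded (tracePlus ρ) (emb α) → lvl α ≤ k :=
  stmt8_general atomsOf ded F lvl k emb valid hatom hwf1 hlem
end

section
/- Lemma 3 of the paper (abstract form): Let F be well-formed and let p be F-increasing: for every generalized role R.r of p and every substitution σ, and every atom α, F(α, r⁺σ) ⊒ ⌜α⌝ ⊓ F(α, R⁻σ). Then for every valid trace ρ.e of p, e⁺ ⊒_F̂ ρ⁻, i.e. for every atom α occurring in e⁺, ⌜α⌝ ⊓ F(α, e⁺) ⊒ ⌜α⌝ ⊓ F(α, ρ⁻). -/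
/-- A protocol step, with the set of messages sent (`sp`), received (`sm`),
and a session identifier. -/
structure SessStep (M Sess : Type*) where
  sp : Set M
  sm : Set M
  sid : Sess

/-- Messages received along a trace. -/
def traceMinus {M Sess : Type*} (ρ : List (SessStep M Sess)) : Set M :=
  ⋃ s ∈ ρ, s.sm

/-- The subtrace of `ρ` with session identifier `i`. -/
def sessProj {M Sess : Type*} [DecidableEq Sess]
    (ρ : List (SessStep M Sess)) (i : Sess) : List (SessStep M Sess) :=
  ρ.filter (fun s => s.sid = i)

theorem traceMinus_mono {M Sess : Type*} {ρ ρ' : List (SessStep M Sess)} (h : ρ ⊆ ρ') :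
    traceMinus ρ ⊆ traceMinus ρ' :=
  Set.biUnion_subset_biUnion_left h

theorem traceMinus_sessProj_subset {M Sess : Type*} [DecidableEq Sess]
    (ρ : List (SessStep M Sess)) (i : Sess) : traceMinus (sessProj ρ i) ⊆ traceMinus ρ :=
  traceMinus_mono (List.filter_subset_self _)

theorem antitone_of_map_sup_eq_inf {α L : Type*} [SemilatticeSup α] [SemilatticeInf L]
    {f : α → L} (h : ∀ a b, f (a ⊔ b) = f a ⊓ f b) : Antitone f := by
  intro a b hab
  rw [← sup_eq_right.mpr hab, h]
  exact inf_le_left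

/-- Lemma 3 of the paper, abstract form: if `F` is well-formed
and the protocol is `F`-increasing on generalized roles, then for every valid
trace `ρ.e` we have `e⁺ ⊒_F̂ ρ⁻`. -/
theorem stmt12 {A M L Sess Role RStep Subst : Type*}
    [Lattice L] [DecidableEq Sess]
    (occursIn : A → Set M → Prop)
    (F : A → Set M → L) (lvl : A → L)
    -- received messages of a (generalized) role under a substitution,
    -- and sent messages of its last step under a substitution
    (roleRecv : Role → Subst → Set M)
    (stepSent : RStep → Subst → Set M)
    -- F is well-formed (union-to-meet part)
    (hwf3 : ∀ (α : A) (S₁ S₂ : Set M), F α (S₁ ∪ S₂) = F α S₁ ⊓ F α S₂)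
    -- the protocol is F-increasing:
    (hincr : ∀ (R : Role) (r : RStep) (σ : Subst) (α : A),
      lvl α ⊓ F α (roleRecv R σ) ≤ F α (stepSent r σ)) :
    ∀ (ρ : List (SessStep M Sess)) (e : SessStep M Sess),
      -- validity of ρ.e: e is an instance of the last step of a generalized
      -- role R.r by a substitution σ, matching the session subtrace ρⁱ
      (∃ (R : Role) (r : RStep) (σ : Subst) (i : Sess),
        roleRecv R σ = traceMinus (sessProj ρ i) ∧ stepSent r σ = e.sp) →
      -- conclusion: e⁺ ⊒_F̂ ρ⁻
      ∀ α : A, occursIn α e.sp →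
        lvl α ⊓ F α (traceMinus ρ) ≤ lvl α ⊓ F α e.sp := by
  rintro ρ e ⟨R, r, σ, i, hR, hr⟩ α -
  have hρ : F α (traceMinus ρ) ≤ F α (roleRecv R σ) :=
    hR ▸ antitone_of_map_sup_eq_inf (hwf3 α) (traceMinus_sessProj_subset ρ i)
  have hsent : lvl α ⊓ F α (traceMinus ρ) ≤ F α e.sp :=
    hr ▸ (inf_le_inf_left _ hρ).trans (hincr R r σ α)
  exact le_inf inf_le_left hsent
end
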